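/- arXiv:2512.18730 — 3 statements merged into one kernel-verified Lean document; each statement's English description precedes it below -/
import Mathlib

section
/- Let Y be a finite nonempty set, let π_ref be a probability mass function on Y with π_ref(y) > 0 for all y, let r : Y → ℝ, and let β > 0. Among all probability mass functions π on Y that are absolutely continuous with respect to π_ref, the objective ∑_y π(y) r(y) − β ∑_y π(y) log(π(y)/π_ref(y)) is uniquely maximized by π*(y) = π_ref(y) exp(r(y)/β) / Z, where Z = ∑_{y'} π_ref(y') exp(r(y')/β); moreover the maximal value of the objective equals β log Z. -/
private lemma aux_log (a b : ℝ) (ha : 0 ≤ a) (hb : 0 < b) :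
    a - b ≤ a * Real.log (a / b) := by
  rcases eq_or_lt_of_le ha with h | h
  · rw [← h]; simp; linarith
  · have h1 : Real.log (b / a) ≤ b / a - 1 := Real.log_le_sub_one_of_pos (by positivity)
    have h2 : a * Real.log (a / b) = -(a * Real.log (b / a)) := by
      rw [show a / b = (b / a)⁻¹ by rw [inv_div], Real.log_inv]; ring
    have h3 : a * (b / a - 1) = b - a := by field_simp
    nlinarith [mul_le_mul_of_nonneg_left h1 h.le]

private lemma aux_log_strict (a b : ℝ) (ha : 0 ≤ a) (hb : 0 < b) (hne : a ≠ b) :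
    a - b < a * Real.log (a / b) := by
  rcases eq_or_lt_of_le ha with h | h
  · rw [← h]; simp; linarith
  · have hx : b / a ≠ 1 := by
      intro hc
      apply hne
      field_simp at hc
      linarith
    have h1 : Real.log (b / a) < b / a - 1 :=
      Real.log_lt_sub_one_of_pos (by positivity) hx
    have h2 : a * Real.log (a / b) = -(a * Real.log (b / a)) := by
      rw [show a / b = (b / a)⁻¹ by rw [inv_div], Real.log_inv]; ring
    have h3 : a * (b / a - 1) = b - a := by field_simp
    nlinarith [mul_lt_mul_of_pos_left h1 h]

/-- Among all probability mass functions `π` on a finite nonempty set `Y`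
that are absolutely continuous with respect to a strictly positive pmf `πref`, the
KL-regularized objective `∑ y, π y * r y - β * ∑ y, π y * log (π y / πref y)` is uniquely
maximized by `πstar y = πref y * exp (r y / β) / Z`, and the maximal value is `β * log Z`. -/
theorem stmt0 {Y : Type*} [Fintype Y] [Nonempty Y]
    (πref : Y → ℝ) (hpos : ∀ y, 0 < πref y) (hsum : ∑ y, πref y = 1)
    (r : Y → ℝ) (β : ℝ) (hβ : 0 < β)
    (J : (Y → ℝ) → ℝ)
    (hJ : ∀ π : Y → ℝ,
      J π = ∑ y, π y * r y - β * ∑ y, π y * Real.log (π y / πref y))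
    (Z : ℝ) (hZ : Z = ∑ y', πref y' * Real.exp (r y' / β))
    (πstar : Y → ℝ) (hπstar : ∀ y, πstar y = πref y * Real.exp (r y / β) / Z) :
    J πstar = β * Real.log Z ∧
    ∀ π : Y → ℝ, (∀ y, 0 ≤ π y) → (∑ y, π y = 1) →
      (∀ y, πref y = 0 → π y = 0) →
      J π ≤ J πstar ∧ (π ≠ πstar → J π < J πstar) := by
  have hZpos : 0 < Z := by
    rw [hZ]
    exact Finset.sum_pos (fun y _ => mul_pos (hpos y) (Real.exp_pos _)) Finset.univ_nonempty
  have hstarpos : ∀ y, 0 < πstar y := fun y => by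
    rw [hπstar]
    have := hpos y
    positivity
  have hstarsum : ∑ y, πstar y = 1 := by
    simp only [hπstar]
    rw [← Finset.sum_div, ← hZ, div_self hZpos.ne']
  have hlogstar : ∀ y, Real.log (πstar y) = Real.log (πref y) + r y / β - Real.log Z := by
    intro y
    rw [hπstar, Real.log_div (mul_pos (hpos y) (Real.exp_pos _)).ne' hZpos.ne',
      Real.log_mul (hpos y).ne' (Real.exp_ne_zero _), Real.log_exp]
  have key : ∀ π : Y → ℝ, (∀ y, 0 ≤ π y) → (∑ y, π y = 1) →
      J π = β * Real.log Z - β * ∑ y, π y * Real.log (π y / πstar y) := by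
    intro π hge h1
    rw [hJ]
    have hterm : ∀ y ∈ Finset.univ, π y * r y - β * (π y * Real.log (π y / πref y))
        = π y * (β * Real.log Z) - β * (π y * Real.log (π y / πstar y)) := by
      intro y _
      rcases eq_or_lt_of_le (hge y) with h | h
      · rw [← h]; ring
      · rw [Real.log_div h.ne' (hstarpos y).ne', Real.log_div h.ne' (hpos y).ne',
          hlogstar y]
        field_simp
        ring
    calc ∑ y, π y * r y - β * ∑ y, π y * Real.log (π y / πref y)
        = ∑ y, (π y * r y - β * (π y * Real.log (π y / πref y))) := by
          rw [Finset.sum_sub_distrib, Finset.mul_sum]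
      _ = ∑ y, (π y * (β * Real.log Z) - β * (π y * Real.log (π y / πstar y))) :=
          Finset.sum_congr rfl hterm
      _ = (∑ y, π y) * (β * Real.log Z) - β * ∑ y, π y * Real.log (π y / πstar y) := by
          rw [Finset.sum_sub_distrib, Finset.sum_mul, Finset.mul_sum]
      _ = β * Real.log Z - β * ∑ y, π y * Real.log (π y / πstar y) := by
          rw [h1, one_mul]
  have Jstar : J πstar = β * Real.log Z := by
    rw [key πstar (fun y => (hstarpos y).le) hstarsum]
    have : ∑ y, πstar y * Real.log (πstar y / πstar y) = 0 :=
      Finset.sum_eq_zero fun y _ => by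
        rw [div_self (hstarpos y).ne', Real.log_one, mul_zero]
    rw [this, mul_zero, sub_zero]
  refine ⟨Jstar, fun π hge h1 _ => ?_⟩
  have hK := key π hge h1
  have hsumle : 0 ≤ ∑ y, π y * Real.log (π y / πstar y) := by
    have h : ∑ y, (π y - πstar y) ≤ ∑ y, π y * Real.log (π y / πstar y) :=
      Finset.sum_le_sum (fun y _ => aux_log (π y) (πstar y) (hge y) (hstarpos y))
    rw [Finset.sum_sub_distrib, h1, hstarsum] at h
    linarith
  constructor
  · rw [hK, Jstar]
    nlinarith [mul_nonneg hβ.le hsumle]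
  · intro hne
    obtain ⟨y0, hy0⟩ : ∃ y, π y ≠ πstar y := by
      by_contra h; push_neg at h; exact hne (funext h)
    have hstrict : 0 < ∑ y, π y * Real.log (π y / πstar y) := by
      have hlt : ∑ y, (π y - πstar y) < ∑ y, π y * Real.log (π y / πstar y) :=
        Finset.sum_lt_sum (fun y _ => aux_log (π y) (πstar y) (hge y) (hstarpos y))
          ⟨y0, Finset.mem_univ y0,
            aux_log_strict (π y0) (πstar y0) (hge y0) (hstarpos y0) hy0⟩
      rw [Finset.sum_sub_distrib, h1, hstarsum] at hlt
      linarith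
    rw [hK, Jstar]
    nlinarith [mul_pos hβ hstrict]
end

section
/- Let Y be a finite nonempty set, let π_inst be a strictly positive probability mass function on Y, let r : Y → ℝ, and define π_λ(y) = π_inst(y) exp(λ r(y))/Z_λ with Z_λ = ∑_{y'} π_inst(y') exp(λ r(y')), and R_λ = ∑_y π_λ(y) r(y). Fix μ ∈ ℝ and let π* = π_μ with R* = R_μ. Then the derivative with respect to λ of the function D(λ) = ∑_y π*(y) log(π*(y)/π_λ(y)) equals −(R* − R_λ). -/
/-!
Writing `π_l(y) = π_inst(y) e^{l r(y)} / Z(l)`, the logarithm of the ratio `π*(y) / π_l(y)` is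
`log (π*(y) / π_inst(y)) - l r(y) + log Z(l)`, so averaging over `π*` gives
`D(l) = const - l R* + log Z(l)`. The derivative of the log-partition function `log Z` is the
mean of `r` under `π_l`, i.e. `R_l`.
-/

open Real Finset

namespace ExpTilt

variable {Y : Type*} [Fintype Y] (w r : Y → ℝ)

noncomputable def partitionFn (l : ℝ) : ℝ := ∑ y, w y * exp (l * r y)

noncomputable def tilt (l : ℝ) (y : Y) : ℝ := w y * exp (l * r y) / partitionFn w r l

variable {w}

lemma partitionFn_pos [Nonempty Y] (hw : ∀ y, 0 < w y) (l : ℝ) : 0 < partitionFn w r l :=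
  sum_pos (fun y _ => mul_pos (hw y) (exp_pos _)) univ_nonempty

lemma sum_tilt [Nonempty Y] (hw : ∀ y, 0 < w y) (l : ℝ) : ∑ y, tilt w r l y = 1 := by
  simp only [tilt, ← sum_div]
  exact div_self (partitionFn_pos r hw l).ne'

lemma log_div_tilt [Nonempty Y] (hw : ∀ y, 0 < w y) {x : ℝ} (hx : x ≠ 0) (l : ℝ) (y : Y) :
    log (x / tilt w r l y) = log (x / w y) - l * r y + log (partitionFn w r l) := by
  have hZ := (partitionFn_pos r hw l).ne'
  have hw' := (hw y).ne'
  rw [tilt, div_div_eq_mul_div, log_div (mul_ne_zero hx hZ) (mul_ne_zero hw' (exp_pos _).ne'),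
    log_mul hx hZ, log_mul hw' (exp_pos _).ne', log_exp, log_div hx hw']
  ring

lemma sum_mul_log_div_tilt [Nonempty Y] (hw : ∀ y, 0 < w y) {q : Y → ℝ} (hq : ∑ y, q y = 1)
    (l : ℝ) :
    ∑ y, q y * log (q y / tilt w r l y) =
      ∑ y, q y * log (q y / w y) - l * ∑ y, q y * r y + log (partitionFn w r l) := by
  have hterm : ∀ y, q y * log (q y / tilt w r l y) =
      q y * log (q y / w y) - l * (q y * r y) + q y * log (partitionFn w r l) := by
    intro y
    rcases eq_or_ne (q y) 0 with h | h
    · simp [h]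
    · rw [log_div_tilt r hw h]
      ring
  simp only [hterm, sum_add_distrib, sum_sub_distrib, ← mul_sum, ← sum_mul, hq, one_mul]

lemma hasDerivAt_partitionFn (l : ℝ) :
    HasDerivAt (partitionFn w r) (∑ y, w y * exp (l * r y) * r y) l := by
  unfold partitionFn
  refine HasDerivAt.fun_sum fun y _ => ?_
  have := (((hasDerivAt_id l).mul_const (r y)).exp).const_mul (w y)
  simpa [mul_assoc] using this

lemma hasDerivAt_log_partitionFn [Nonempty Y] (hw : ∀ y, 0 < w y) (l : ℝ) :
    HasDerivAt (fun l => log (partitionFn w r l)) (∑ y, tilt w r l y * r y) l := by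
  convert (hasDerivAt_partitionFn r l).log (partitionFn_pos r hw l).ne' using 1
  simp only [tilt, sum_div, div_mul_eq_mul_div]

end ExpTilt

open ExpTilt in
theorem stmt13_general {Y : Type*} [Fintype Y] [Nonempty Y]
    (πinst : Y → ℝ) (hpos : ∀ y, 0 < πinst y)
    (r : Y → ℝ)
    (Z : ℝ → ℝ) (hZ : ∀ l, Z l = ∑ y', πinst y' * Real.exp (l * r y'))
    (p : ℝ → Y → ℝ) (hp : ∀ l y, p l y = πinst y * Real.exp (l * r y) / Z l)
    (R : ℝ → ℝ) (hR : ∀ l, R l = ∑ y, p l y * r y)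
    (μ : ℝ)
    (D : ℝ → ℝ) (hD : ∀ l, D l = ∑ y, p μ y * Real.log (p μ y / p l y)) :
    ∀ l : ℝ, HasDerivAt D (-(R μ - R l)) l := by
  obtain rfl : Z = partitionFn πinst r := funext hZ
  obtain rfl : p = tilt πinst r := funext fun l => funext (hp l)
  have hD' : D = fun l => ∑ y, tilt πinst r μ y * log (tilt πinst r μ y / πinst y) - l * R μ
      + log (partitionFn πinst r l) := by
    ext l
    rw [hD, sum_mul_log_div_tilt r hpos (sum_tilt r hpos μ), hR]
  intro l
  rw [hD', hR l]
  exact ((((hasDerivAt_id l).mul_const (R μ)).const_sub _).add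
    (hasDerivAt_log_partitionFn r hpos l)).congr_deriv (by ring)

/-- KL derivative along the exponential family: Fix a target member
`π* = p μ` of the exponential family `p l y = πinst y * exp (l * r y) / Z l`, with target
accuracy `R* = R μ`.  Then the KL divergence `D l = ∑ y, p μ y * log (p μ y / p l y)`
satisfies `d/dl D = -(R* - R l)`. -/
theorem stmt13 {Y : Type*} [Fintype Y] [Nonempty Y]
    (πinst : Y → ℝ) (hpos : ∀ y, 0 < πinst y) (hsum : ∑ y, πinst y = 1)
    (r : Y → ℝ)
    (Z : ℝ → ℝ) (hZ : ∀ l, Z l = ∑ y', πinst y' * Real.exp (l * r y'))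
    (p : ℝ → Y → ℝ) (hp : ∀ l y, p l y = πinst y * Real.exp (l * r y) / Z l)
    (R : ℝ → ℝ) (hR : ∀ l, R l = ∑ y, p l y * r y)
    (μ : ℝ)
    (D : ℝ → ℝ) (hD : ∀ l, D l = ∑ y, p μ y * Real.log (p μ y / p l y)) :
    ∀ l : ℝ, HasDerivAt D (-(R μ - R l)) l :=
  stmt13_general πinst hpos r Z hZ p hp R hR μ D hD
end

section
/- Let Y be a finite nonempty set, let π_inst be a strictly positive probability mass function on Y, let r : Y → {0,1} be a binary reward taking both values 0 and 1 on Y, and define π_λ(y) = π_inst(y) exp(λ r(y))/Z_λ with Z_λ = ∑_{y'} π_inst(y') exp(λ r(y')), and R_λ = ∑_y π_λ(y) r(y). Let β > 0 and let π_reas = π_{1/β} be the optimal policy, with R_reas = R_{1/β}. Then for every λ ∈ ℝ, the KL divergence ∑_y π_reas(y) log(π_reas(y)/π_λ(y)) equals the Bernoulli KL divergence D_Bern(R_reas ‖ R_λ) = R_reas log(R_reas/R_λ) + (1 − R_reas) log((1 − R_reas)/(1 − R_λ)). -/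
/-- KL equals Bernoulli KL: For a binary reward `r : Y → {0,1}` attaining
both values, the exponential family `p l y = πinst y * exp (l * r y) / Z l` with accuracy
`R l = ∑ y, p l y * r y`, and the optimal policy `πreas = p (1/β)` with target accuracy
`R_reas = R (1/β)`, one has for every `l`:
`KL(πreas ‖ p l) = D_Bern(R_reas ‖ R l)
  = R_reas * log (R_reas / R l) + (1 - R_reas) * log ((1 - R_reas) / (1 - R l))`. -/
theorem stmt14 {Y : Type*} [Fintype Y] [Nonempty Y]
    (πinst : Y → ℝ) (hpos : ∀ y, 0 < πinst y) (hsum : ∑ y, πinst y = 1)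
    (r : Y → ℝ) (hr : ∀ y, r y = 0 ∨ r y = 1)
    (hr1 : ∃ y, r y = 1) (hr0 : ∃ y, r y = 0)
    (Z : ℝ → ℝ) (hZ : ∀ l, Z l = ∑ y', πinst y' * Real.exp (l * r y'))
    (p : ℝ → Y → ℝ) (hp : ∀ l y, p l y = πinst y * Real.exp (l * r y) / Z l)
    (R : ℝ → ℝ) (hR : ∀ l, R l = ∑ y, p l y * r y)
    (β : ℝ) (hβ : 0 < β) :
    ∀ l : ℝ,
      ∑ y, p (1 / β) y * Real.log (p (1 / β) y / p l y) =
        R (1 / β) * Real.log (R (1 / β) / R l) +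
          (1 - R (1 / β)) * Real.log ((1 - R (1 / β)) / (1 - R l)) := by
  intro l
  set a : ℝ := 1 / β with ha
  set S1 : ℝ := ∑ y, πinst y * r y with hS1def
  have hrn : ∀ y, 0 ≤ r y := fun y => by rcases hr y with h | h <;> simp [h]
  have hS1pos : 0 < S1 := by
    obtain ⟨y0, hy0⟩ := hr1
    refine Finset.sum_pos' (fun y _ => mul_nonneg (hpos y).le (hrn y))
      ⟨y0, Finset.mem_univ _, ?_⟩
    simpa [hy0] using hpos y0
  have hS1lt : S1 < 1 := by
    obtain ⟨y1, hy1⟩ := hr0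
    have : S1 < ∑ y, πinst y := by
      refine Finset.sum_lt_sum (fun y _ => ?_) ⟨y1, Finset.mem_univ _, ?_⟩
      · rcases hr y with h | h <;> simp [h, (hpos y).le]
      · simpa [hy1] using hpos y1
    linarith [this, hsum]
  have hZform : ∀ t, Z t = (1 - S1) + Real.exp t * S1 := by
    intro t
    rw [hZ]
    have key : ∀ y, πinst y * Real.exp (t * r y)
        = (πinst y - πinst y * r y) + Real.exp t * (πinst y * r y) := by
      intro y; rcases hr y with h | h <;> simp [h] <;> ring
    rw [Finset.sum_congr rfl (fun y _ => key y), Finset.sum_add_distrib,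
      Finset.sum_sub_distrib, ← Finset.mul_sum, ← hS1def, hsum]
  have hZpos : ∀ t, 0 < Z t := by
    intro t
    rw [hZform t]
    nlinarith [Real.exp_pos t, hS1pos, hS1lt]
  have hpsum : ∀ t, ∑ y, p t y = 1 := by
    intro t
    simp only [hp]
    rw [← Finset.sum_div, ← hZ, div_self (hZpos t).ne']
  have hRform : ∀ t, R t = Real.exp t * S1 / Z t := by
    intro t
    rw [hR]
    have key : ∀ y, p t y * r y = Real.exp t * (πinst y * r y) / Z t := by
      intro y; rw [hp]; rcases hr y with h | h <;> simp [h] <;> ring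
    rw [Finset.sum_congr rfl (fun y _ => key y), ← Finset.sum_div, ← Finset.mul_sum,
      ← hS1def]
  have hRpos : ∀ t, 0 < R t := by
    intro t
    rw [hRform t]
    exact div_pos (mul_pos (Real.exp_pos t) hS1pos) (hZpos t)
  have h1R : ∀ t, 1 - R t = (1 - S1) / Z t := by
    intro t
    rw [hRform t, eq_div_iff (hZpos t).ne', sub_mul, one_mul,
      div_mul_cancel₀ _ (hZpos t).ne']
    linarith [hZform t]
  have h1Rpos : ∀ t, 0 < 1 - R t := by
    intro t
    rw [h1R t]
    exact div_pos (by linarith) (hZpos t)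
  have hlog : ∀ y, Real.log (p a y / p l y)
      = (a - l) * r y + (Real.log (Z l) - Real.log (Z a)) := by
    intro y
    have hratio : p a y / p l y = Real.exp ((a - l) * r y) * (Z l / Z a) := by
      have h1 : Real.exp ((a - l) * r y)
          = Real.exp (a * r y) / Real.exp (l * r y) := by
        rw [← Real.exp_sub]; ring_nf
      rw [hp, hp, h1]
      field_simp [(hpos y).ne', (hZpos a).ne', (hZpos l).ne']
    rw [hratio, Real.log_mul (Real.exp_ne_zero _)
        (ne_of_gt (div_pos (hZpos l) (hZpos a))), Real.log_exp,
      Real.log_div (hZpos l).ne' (hZpos a).ne']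
  have hL : ∑ y, p a y * Real.log (p a y / p l y)
      = (a - l) * R a + (Real.log (Z l) - Real.log (Z a)) := by
    have key : ∀ y, p a y * Real.log (p a y / p l y)
        = (a - l) * (p a y * r y) + (Real.log (Z l) - Real.log (Z a)) * p a y := by
      intro y; rw [hlog y]; ring
    rw [Finset.sum_congr rfl (fun y _ => key y), Finset.sum_add_distrib,
      ← Finset.mul_sum, ← Finset.mul_sum, ← hR, hpsum a, mul_one]
  have hlogR : ∀ t, Real.log (R t) = t + Real.log S1 - Real.log (Z t) := by
    intro t
    rw [hRform t, Real.log_div (by positivity) (hZpos t).ne',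
      Real.log_mul (Real.exp_ne_zero t) hS1pos.ne', Real.log_exp]
  have hlog1R : ∀ t, Real.log (1 - R t) = Real.log (1 - S1) - Real.log (Z t) := by
    intro t
    rw [h1R t, Real.log_div (by linarith) (hZpos t).ne']
  rw [hL, Real.log_div (hRpos a).ne' (hRpos l).ne',
    Real.log_div (h1Rpos a).ne' (h1Rpos l).ne', hlogR a, hlogR l, hlog1R a, hlog1R l]
  ring
end
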